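/- arXiv:0902.1717 — 4 statements merged into one kernel-verified Lean document; each statement's English description precedes it below -/
import Mathlib

section
/- Let f ∈ L¹(ℝ) be nonnegative with #crests(f) = N (a finite positive integer). Then for every z > 0, |f̂(z)| ≤ N·π·√10 · ∫₀^{1/z} f*(x) dx, where f* is the decreasing rearrangement of f. -/
/-!
Each piece `g` of the decomposition is handled by the layer-cake formula
`ĝ(z) = ∫_{t > 0} ∫_{g > t} e^{-ixz} dx dt`. Since `g` crests once, its superlevel sets
are intervals, and over an interval of length `ℓ` the oscillatory integral has modulus at
most `min ℓ (2/z) ≤ 2 min ℓ (1/z)`. The superlevel sets of the `N` pieces are almost disjoint and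
lie in those of `|f|`, so `|f̂(z)| ≤ 2N ∫_{t > 0} min (λ(t), 1/z) dt` with `λ` the distribution
function of `f`. By Tonelli the last integral is `∫₀^{1/z} f*`, the two iterated integrals
computing the area of `{(t, x) : t > 0, 0 < x < 1/z, x < λ(t)}`. Finally `2 ≤ π√10`.
-/

open MeasureTheory Real Set

/-- The Fourier transform on the line: `f̂(z) = ∫ f(x) e^{-ixz} dx`. -/
noncomputable def fourierTransform (f : ℝ → ℝ) (z : ℝ) : ℂ :=
  ∫ x : ℝ, (f x : ℂ) * Complex.exp (-(x * z) * Complex.I)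

/-- The decreasing rearrangement `f*(x) = inf {α > 0 : |{t : |f t| > α}| ≤ x}`. -/
noncomputable def decreasingRearrangement (f : ℝ → ℝ) (x : ℝ) : ℝ :=
  sInf {α : ℝ | 0 < α ∧ volume {t : ℝ | α < |f t|} ≤ ENNReal.ofReal x}

/-- A nonnegative function crests once: increasing up to some `b`, decreasing afterwards. -/
def CrestsOnce (f : ℝ → ℝ) : Prop :=
  ∃ b : ℝ, MonotoneOn f (Set.Iic b) ∧ AntitoneOn f (Set.Ici b)

/-- `f` can be written as a sum of `n` nonnegative functions with pairwise almost
disjoint supports, each of which crests once. -/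
def HasCrestDecomp (f : ℝ → ℝ) (n : ℕ) : Prop :=
  ∃ g : Fin n → ℝ → ℝ,
    (∀ i, ∀ x, 0 ≤ g i x) ∧
    (∀ i, CrestsOnce (g i)) ∧
    (Pairwise fun i j =>
      volume (Function.support (g i) ∩ Function.support (g j)) = 0) ∧
    (∀ x, f x = ∑ i, g i x)

/-- `#crests(f) = N` : `N` is the least number of pieces in such a decomposition. -/
def CrestsEq (f : ℝ → ℝ) (N : ℕ) : Prop :=
  HasCrestDecomp f N ∧ ∀ m : ℕ, m < N → ¬ HasCrestDecomp f m

open scoped ENNReal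

section LayerCake

variable {E : Type*} [NormedAddCommGroup E] [NormedSpace ℝ E] [CompleteSpace E]

lemma setIntegral_Ioi_indicator_Iio_const {a : ℝ} (ha : 0 ≤ a) (c : E) :
    ∫ t in Ioi 0, (Iio a).indicator (fun _ => c) t = a • c := by
  rw [integral_indicator_const _ measurableSet_Iio, measureReal_restrict_apply measurableSet_Iio,
    Iio_inter_Ioi, Real.volume_real_Ioo_of_le ha, sub_zero]

theorem integral_smul_eq_integral_setIntegral_lt {X : Type*} [MeasurableSpace X] {μ : Measure X}
    [SFinite μ] {g : X → ℝ} {e : X → E} (hgm : Measurable g) (hg0 : 0 ≤ g)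
    (he : AEStronglyMeasurable e μ) (hge : Integrable (fun x => g x • e x) μ) :
    ∫ x, g x • e x ∂μ = ∫ t in Ioi 0, ∫ x in {x | t < g x}, e x ∂μ := by
  set S : Set (X × ℝ) := {p | p.2 < g p.1}
  have hS : MeasurableSet S := measurableSet_lt measurable_snd (hgm.comp measurable_fst)
  set F : X × ℝ → E := S.indicator (fun p => e p.1)
  have hsection : ∀ x, (fun t => F (x, t)) = (Iio (g x)).indicator (fun _ => e x) := fun x => rfl
  have hF : Integrable F (μ.prod (volume.restrict (Ioi 0))) := by
    refine (integrable_prod_iff (he.comp_fst.indicator hS)).2 ⟨ae_of_all _ fun x => ?_, ?_⟩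
    · rw [hsection]
      exact (integrable_indicator_iff measurableSet_Iio).2 <| integrableOn_const
        (by simp [Measure.restrict_apply measurableSet_Iio, Iio_inter_Ioi])
    · refine hge.norm.congr (ae_of_all _ fun x => ?_)
      change ‖g x • e x‖ = ∫ t in Ioi 0, ‖(Iio (g x)).indicator (fun _ => e x) t‖
      simp_rw [norm_indicator_eq_indicator_norm]
      rw [setIntegral_Ioi_indicator_Iio_const (hg0 x), norm_smul, Real.norm_of_nonneg (hg0 x),
        smul_eq_mul]
  calc ∫ x, g x • e x ∂μ = ∫ x, (∫ t in Ioi 0, F (x, t)) ∂μ := by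
        simp_rw [hsection, setIntegral_Ioi_indicator_Iio_const (hg0 _)]
    _ = ∫ t in Ioi 0, ∫ x, F (x, t) ∂μ := integral_integral_swap hF
    _ = ∫ t in Ioi 0, ∫ x in {x | t < g x}, e x ∂μ := by
        congr 1 with t
        exact integral_indicator (hgm measurableSet_Ioi)

end LayerCake

lemma norm_cexp_neg_mul_mul_I (x z : ℝ) : ‖Complex.exp (-(x * z) * Complex.I)‖ = 1 := by
  rw [← Complex.ofReal_mul, ← Complex.ofReal_neg, Complex.norm_exp_ofReal_mul_I]

lemma norm_integral_Ioo_cexp_le {z : ℝ} (hz : 0 < z) (a b : ℝ) :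
    ‖∫ x in Ioo a b, Complex.exp (-(x * z) * Complex.I)‖ ≤ 2 / z := by
  rcases lt_or_ge b a with hba | hab
  · simp only [Ioo_eq_empty_of_le hba.le, Measure.restrict_empty, integral_zero_measure, norm_zero]
    positivity
  set c : ℂ := -z * Complex.I
  have hc : c ≠ 0 := by simp [c, hz.ne']
  have hexp : ∀ x : ℝ, Complex.exp (c * x) = Complex.exp (-(x * z) * Complex.I) := fun x => by
    simp only [c]; ring_nf
  rw [← integral_Ioc_eq_integral_Ioo, ← intervalIntegral.integral_of_le hab]
  simp_rw [← hexp]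
  rw [integral_exp_mul_complex hc, norm_div, hexp, hexp]
  have hnorm_c : ‖c‖ = z := by simp [c, hz.le]
  rw [hnorm_c]
  gcongr
  calc _ ≤ ‖Complex.exp (-(b * z) * Complex.I)‖ + ‖Complex.exp (-(a * z) * Complex.I)‖ :=
        norm_sub_le _ _
    _ = 2 := by rw [norm_cexp_neg_mul_mul_I, norm_cexp_neg_mul_mul_I]; norm_num

namespace Set.OrdConnected

variable {s : Set ℝ}

lemma bddAbove_of_volume_ne_top (hs : s.OrdConnected) (hfin : volume s ≠ ∞) : BddAbove s := by
  rcases s.eq_empty_or_nonempty with rfl | ⟨m, hm⟩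
  · exact bddAbove_empty
  by_contra h
  refine hfin (top_unique ?_)
  calc ∞ = volume (Ici m) := Real.volume_Ici.symm
    _ ≤ volume s := measure_mono fun y hy => by
        obtain ⟨w, hw, hyw⟩ := not_bddAbove_iff.1 h y
        exact hs.out hm hw ⟨hy, hyw.le⟩

lemma bddBelow_of_volume_ne_top (hs : s.OrdConnected) (hfin : volume s ≠ ∞) : BddBelow s := by
  rcases s.eq_empty_or_nonempty with rfl | ⟨m, hm⟩
  · exact bddBelow_empty
  by_contra h
  refine hfin (top_unique ?_)
  calc ∞ = volume (Iic m) := Real.volume_Iic.symm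
    _ ≤ volume s := measure_mono fun y hy => by
        obtain ⟨w, hw, hwy⟩ := not_bddBelow_iff.1 h y
        exact hs.out hw hm ⟨hwy.le, hy⟩

lemma Ioo_csInf_csSup_ae_eq (hs : s.OrdConnected) (hfin : volume s ≠ ∞) :
    Ioo (sInf s) (sSup s) =ᵐ[volume] s := by
  rcases s.eq_empty_or_nonempty with rfl | hne
  · simp
  have hsub : Ioo (sInf s) (sSup s) ⊆ s := fun x hx => by
    obtain ⟨u, hu, hux⟩ := exists_lt_of_csInf_lt hne hx.1
    obtain ⟨v, hv, hxv⟩ := exists_lt_of_lt_csSup hne hx.2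
    exact hs.out hu hv ⟨hux.le, hxv.le⟩
  refine ae_eq_of_subset_of_measure_ge hsub ?_ measurableSet_Ioo.nullMeasurableSet hfin
  calc volume s ≤ volume (Icc (sInf s) (sSup s)) := measure_mono fun x hx =>
        ⟨csInf_le (hs.bddBelow_of_volume_ne_top hfin) hx,
          le_csSup (hs.bddAbove_of_volume_ne_top hfin) hx⟩
    _ = volume (Ioo (sInf s) (sSup s)) := by rw [Real.volume_Icc, Real.volume_Ioo]

lemma enorm_setIntegral_cexp_le (hs : s.OrdConnected) (hfin : volume s ≠ ∞) {z : ℝ}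
    (hz : 0 < z) :
    ‖∫ x in s, Complex.exp (-(x * z) * Complex.I)‖ₑ ≤
      2 * min (volume s) (ENNReal.ofReal (1 / z)) := by
  rcases min_choice (volume s) (ENNReal.ofReal (1 / z)) with h | h <;> rw [h]
  · calc _ ≤ ∫⁻ x in s, ‖Complex.exp (-(x * z) * Complex.I)‖ₑ :=
          enorm_integral_le_lintegral_enorm _
      _ = volume s := by
          simp_rw [← ofReal_norm, norm_cexp_neg_mul_mul_I, ENNReal.ofReal_one, setLIntegral_one]
      _ ≤ 2 * volume s := le_mul_of_one_le_left' one_le_two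
  · rw [← setIntegral_congr_set (hs.Ioo_csInf_csSup_ae_eq hfin), ← ofReal_norm,
      ← ENNReal.ofReal_ofNat, ← ENNReal.ofReal_mul zero_le_two]
    refine ENNReal.ofReal_le_ofReal ((norm_integral_Ioo_cexp_le hz _ _).trans_eq ?_)
    ring

end Set.OrdConnected

lemma integrable_ofReal_mul_cexp {g : ℝ → ℝ} (hg : Integrable g) (z : ℝ) :
    Integrable fun x : ℝ => (g x : ℂ) * Complex.exp (-(x * z) * Complex.I) :=
  hg.ofReal.mul_bdd (by fun_prop) (ae_of_all _ fun x => (norm_cexp_neg_mul_mul_I x z).le)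

lemma fourierTransform_sum {ι : Type*} (s : Finset ι) {g : ι → ℝ → ℝ}
    (hg : ∀ i ∈ s, Integrable (g i)) (z : ℝ) :
    fourierTransform (fun x => ∑ i ∈ s, g i x) z = ∑ i ∈ s, fourierTransform (g i) z := by
  simp only [fourierTransform, Complex.ofReal_sum, Finset.sum_mul]
  exact integral_finsetSum s fun i hi => integrable_ofReal_mul_cexp (hg i hi) z

namespace CrestsOnce

variable {g : ℝ → ℝ}

lemma ordConnected_superlevel (hg : CrestsOnce g) (t : ℝ) : {x | t < g x}.OrdConnected := by
  obtain ⟨b, hmono, hanti⟩ := hg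
  refine ⟨fun x hx y hy w hw => ?_⟩
  rcases le_total w b with hwb | hbw
  · exact hx.trans_le (hmono (hw.1.trans hwb) hwb hw.1)
  · exact hy.trans_le (hanti hbw (hbw.trans hw.2) hw.2)

protected lemma measurable (hg : CrestsOnce g) : Measurable g :=
  measurable_of_Ioi fun t => (hg.ordConnected_superlevel t).measurableSet

lemma enorm_fourierTransform_le (hg : CrestsOnce g) (hint : Integrable g) (h0 : 0 ≤ g)
    {z : ℝ} (hz : 0 < z) :
    ‖fourierTransform g z‖ₑ ≤
      2 * ∫⁻ t in Ioi 0, min (volume {x | t < g x}) (ENNReal.ofReal (1 / z)) := by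
  have hlayer : fourierTransform g z =
      ∫ t in Ioi 0, ∫ x in {x | t < g x}, Complex.exp (-(x * z) * Complex.I) := by
    simp_rw [fourierTransform, ← Complex.real_smul]
    refine integral_smul_eq_integral_setIntegral_lt hg.measurable h0 (by fun_prop) ?_
    simpa only [Complex.real_smul] using integrable_ofReal_mul_cexp hint z
  rw [hlayer, ← lintegral_const_mul' _ _ ENNReal.ofNat_ne_top]
  refine (enorm_integral_le_lintegral_enorm _).trans (setLIntegral_mono' measurableSet_Ioi
    fun t ht => ?_)
  exact (hg.ordConnected_superlevel t).enorm_setIntegral_cexp_le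
    (hint.measure_gt_lt_top ht).ne hz

end CrestsOnce

lemma antitone_measure_lt {X : Type*} [MeasurableSpace X] (μ : Measure X) (g : X → ℝ) :
    Antitone fun t => μ {x | t < g x} :=
  fun _ _ hst => measure_mono fun _ hx => hst.trans_lt hx

lemma Finset.sum_min_le_card_nsmul_min {ι M : Type*} [AddCommMonoid M] [LinearOrder M]
    [IsOrderedAddMonoid M] [CanonicallyOrderedAdd M] (s : Finset ι) {a : ι → M} {b : M}
    (h : ∑ i ∈ s, a i ≤ b) (c : M) : ∑ i ∈ s, min (a i) c ≤ s.card • min b c :=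
  Finset.sum_le_card_nsmul _ _ _ fun _ hi =>
    min_le_min_right c ((Finset.single_le_sum (fun _ _ => zero_le) hi).trans h)

namespace HasCrestDecomp

variable {f : ℝ → ℝ} {N : ℕ}

lemma enorm_fourierTransform_le (h : HasCrestDecomp f N) (hf : Integrable f) {z : ℝ}
    (hz : 0 < z) :
    ‖fourierTransform f z‖ₑ ≤
      2 * N * ∫⁻ t in Ioi 0, min (volume {x | t < |f x|}) (ENNReal.ofReal (1 / z)) := by
  obtain ⟨g, hg0, hgc, hdisj, hsum⟩ := h
  have hle : ∀ i x, g i x ≤ |f x| := fun i x =>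
    ((Finset.single_le_sum (fun j _ => hg0 j x) (Finset.mem_univ i)).trans_eq
      (hsum x).symm).trans (le_abs_self _)
  have hint : ∀ i, Integrable (g i) := fun i =>
    hf.mono (hgc i).measurable.aestronglyMeasurable <| ae_of_all _ fun x => by
      rw [Real.norm_of_nonneg (hg0 i x), Real.norm_eq_abs]; exact hle i x
  have hlevel : ∀ t > 0, ∑ i, volume {x | t < g i x} ≤ volume {x | t < |f x|} := by
    intro t ht
    have hae : ((Finset.univ : Finset (Fin N)) : Set (Fin N)).Pairwise
        (Function.onFun (AEDisjoint volume) fun i => {x | t < g i x}) := fun i _ j _ hij =>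
      measure_mono_null (fun x hx => show x ∈ (g i).support ∩ (g j).support from
        ⟨(ht.trans hx.1).ne', (ht.trans hx.2).ne'⟩) (hdisj hij)
    rw [← measure_biUnion_finset₀ hae
      fun i _ => ((hgc i).measurable measurableSet_Ioi).nullMeasurableSet]
    exact measure_mono (iUnion₂_subset fun i _ x hx => hx.trans_le (hle i x))
  calc ‖fourierTransform f z‖ₑ = ‖∑ i, fourierTransform (g i) z‖ₑ := by
        rw [funext hsum, fourierTransform_sum _ fun i _ => hint i]
    _ ≤ ∑ i, 2 * ∫⁻ t in Ioi 0, min (volume {x | t < g i x}) (ENNReal.ofReal (1 / z)) :=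
        (enorm_sum_le _ _).trans <| Finset.sum_le_sum fun i _ =>
          (hgc i).enorm_fourierTransform_le (hint i) (hg0 i) hz
    _ = 2 * ∫⁻ t in Ioi 0, ∑ i, min (volume {x | t < g i x}) (ENNReal.ofReal (1 / z)) := by
        rw [← Finset.mul_sum, lintegral_finsetSum _ fun i _ =>
          ((antitone_measure_lt volume (g i)).measurable).min measurable_const]
    _ ≤ 2 * ∫⁻ t in Ioi 0, N * min (volume {x | t < |f x|}) (ENNReal.ofReal (1 / z)) := by
        gcongr 2 * ?_
        refine setLIntegral_mono' measurableSet_Ioi fun t ht => ?_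
        simpa using Finset.univ.sum_min_le_card_nsmul_min (hlevel t ht) _
    _ = 2 * N * ∫⁻ t in Ioi 0, min (volume {x | t < |f x|}) (ENNReal.ofReal (1 / z)) := by
        rw [lintegral_const_mul' _ _ (ENNReal.natCast_ne_top N), mul_assoc]

end HasCrestDecomp

section DecreasingRearrangement

variable {f : ℝ → ℝ}

lemma decreasingRearrangement_nonneg (f : ℝ → ℝ) (x : ℝ) : 0 ≤ decreasingRearrangement f x :=
  Real.sInf_nonneg fun _ ht => ht.1.le

lemma lintegral_volume_lt_abs_lt_top (hf : Integrable f) :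
    ∫⁻ t in Ioi 0, volume {x | t < |f x|} < ∞ := by
  rw [← lintegral_eq_lintegral_meas_lt _ (ae_of_all _ fun x => abs_nonneg (f x))
    hf.abs.aemeasurable]
  exact hf.abs.lintegral_lt_top

lemma exists_volume_lt_abs_le (hf : Integrable f) {x : ℝ} (hx : 0 < x) :
    ∃ t, 0 < t ∧ volume {y | t < |f y|} ≤ ENNReal.ofReal x := by
  by_contra! h
  refine (lintegral_volume_lt_abs_lt_top hf).not_ge ?_
  calc ∞ = ∫⁻ _ in Ioi 0, ENNReal.ofReal x := by
        rw [setLIntegral_const, Real.volume_Ioi, ENNReal.mul_top (by simpa using hx)]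
    _ ≤ ∫⁻ t in Ioi 0, volume {y | t < |f y|} :=
        setLIntegral_mono' measurableSet_Ioi fun t ht => (h t ht).le

lemma decreasingRearrangement_antitoneOn (hf : Integrable f) :
    AntitoneOn (decreasingRearrangement f) (Ioi 0) := fun _ hx _ _ hxy =>
  csInf_le_csInf ⟨0, fun _ ht => ht.1.le⟩ (exists_volume_lt_abs_le hf hx)
    fun _ ht => ⟨ht.1, ht.2.trans (ENNReal.ofReal_le_ofReal hxy)⟩

lemma volume_ofReal_lt_volume_lt_abs_inter_Ioi (hf : Integrable f) {x : ℝ} (hx : 0 < x) :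
    volume ({t | ENNReal.ofReal x < volume {y | t < |f y|}} ∩ Ioi 0) =
      ENNReal.ofReal (decreasingRearrangement f x) := by
  set S := {t | ENNReal.ofReal x < volume {y | t < |f y|}} ∩ Ioi 0
  have hne := exists_volume_lt_abs_le hf hx
  have hsub : S ⊆ Ioc 0 (decreasingRearrangement f x) := fun t ⟨hxt, ht⟩ =>
    ⟨ht, le_csInf hne fun s hs => le_of_not_gt fun hst =>
      (hxt.trans_le (antitone_measure_lt volume _ hst.le)).not_ge hs.2⟩
  have hsup : Ioo 0 (decreasingRearrangement f x) ⊆ S := fun t ⟨ht, htx⟩ =>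
    ⟨lt_of_not_ge fun hle => htx.not_ge (csInf_le ⟨0, fun _ hs => hs.1.le⟩ ⟨ht, hle⟩),
      ht⟩
  refine le_antisymm ((measure_mono hsub).trans_eq ?_) (le_of_eq_of_le ?_ (measure_mono hsup))
  · rw [Real.volume_Ioc, sub_zero]
  · rw [Real.volume_Ioo, sub_zero]

lemma volume_ofReal_lt_inter_Ioo (T : ℝ) (c : ℝ≥0∞) :
    volume ({x : ℝ | ENNReal.ofReal x < c} ∩ Ioo 0 T) = min c (ENNReal.ofReal T) := by
  rcases eq_or_ne c ∞ with rfl | hc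
  · simp [Real.volume_Ioo]
  have hset : {x : ℝ | ENNReal.ofReal x < c} ∩ Ioo 0 T = Ioo 0 (min c.toReal T) := by
    ext x
    simp only [mem_inter_iff, mem_ofPred_eq, mem_Ioo, lt_min_iff]
    constructor
    · rintro ⟨hxc, hx0, hxT⟩
      exact ⟨hx0, (ENNReal.ofReal_lt_iff_lt_toReal hx0.le hc).1 hxc, hxT⟩
    · rintro ⟨hx0, hxc, hxT⟩
      exact ⟨(ENNReal.ofReal_lt_iff_lt_toReal hx0.le hc).2 hxc, hx0, hxT⟩
  rw [hset, Real.volume_Ioo, sub_zero, ENNReal.ofReal_min, ENNReal.ofReal_toReal hc]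

lemma lintegral_min_volume_lt_abs_eq (hf : Integrable f) (T : ℝ) :
    ∫⁻ t in Ioi 0, min (volume {x | t < |f x|}) (ENNReal.ofReal T) =
      ∫⁻ x in Ioo 0 T, ENNReal.ofReal (decreasingRearrangement f x) := by
  set Q : Set (ℝ × ℝ) := {p | ENNReal.ofReal p.2 < volume {y | p.1 < |f y|}}
  have hmeas : Measurable fun t => volume {y | t < |f y|} :=
    (antitone_measure_lt volume _).measurable
  have hQ : MeasurableSet Q :=
    measurableSet_lt (ENNReal.measurable_ofReal.comp measurable_snd) (hmeas.comp measurable_fst)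
  calc _ = ∫⁻ t in Ioi 0, ∫⁻ x in Ioo 0 T, Q.indicator 1 (t, x) := by
        refine lintegral_congr fun t => ?_
        have hs : MeasurableSet {x : ℝ | ENNReal.ofReal x < volume {y | t < |f y|}} :=
          measurableSet_lt ENNReal.measurable_ofReal measurable_const
        rw [← volume_ofReal_lt_inter_Ioo T, ← Measure.restrict_apply hs,
          ← lintegral_indicator_one hs]
        rfl
    _ = ∫⁻ x in Ioo 0 T, ∫⁻ t in Ioi 0, Q.indicator 1 (t, x) :=
        lintegral_lintegral_swap (measurable_one.indicator hQ).aemeasurable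
    _ = _ := by
        refine setLIntegral_congr_fun measurableSet_Ioo fun x hx => ?_
        have hs : MeasurableSet {t | ENNReal.ofReal x < volume {y | t < |f y|}} :=
          measurableSet_lt measurable_const hmeas
        rw [← volume_ofReal_lt_volume_lt_abs_inter_Ioi hf hx.1, ← Measure.restrict_apply hs,
          ← lintegral_indicator_one hs]
        rfl

lemma integrableOn_decreasingRearrangement (hf : Integrable f) (T : ℝ) :
    IntegrableOn (decreasingRearrangement f) (Ioo 0 T) := by
  refine ⟨(aemeasurable_restrict_of_antitoneOn measurableSet_Ioo
    ((decreasingRearrangement_antitoneOn hf).mono Ioo_subset_Ioi_self)).aestronglyMeasurable, ?_⟩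
  rw [hasFiniteIntegral_iff_ofReal (ae_of_all _ (decreasingRearrangement_nonneg f)),
    ← lintegral_min_volume_lt_abs_eq hf T]
  exact (lintegral_mono fun t => min_le_left _ _).trans_lt (lintegral_volume_lt_abs_lt_top hf)

lemma lintegral_min_volume_lt_abs_eq_ofReal_integral (hf : Integrable f) {T : ℝ}
    (hT : 0 ≤ T) :
    ∫⁻ t in Ioi 0, min (volume {x | t < |f x|}) (ENNReal.ofReal T) =
      ENNReal.ofReal (∫ x in 0..T, decreasingRearrangement f x) := by
  rw [lintegral_min_volume_lt_abs_eq hf T, intervalIntegral.integral_of_le hT,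
    integral_Ioc_eq_integral_Ioo, ofReal_integral_eq_lintegral_ofReal
      (integrableOn_decreasingRearrangement hf T)
      (ae_of_all _ (decreasingRearrangement_nonneg f))]

end DecreasingRearrangement

theorem fourier_bound_of_crests_general (f : ℝ → ℝ) (hf : Integrable f)
    (N : ℕ) (hcrests : CrestsEq f N) :
    ∀ z : ℝ, 0 < z →
      ‖fourierTransform f z‖ ≤
        N * π * Real.sqrt 10 * ∫ x in (0:ℝ)..(1/z), decreasingRearrangement f x := by
  intro z hz
  set I := ∫ x in (0:ℝ)..(1/z), decreasingRearrangement f x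
  have hI : 0 ≤ I := intervalIntegral.integral_nonneg (by positivity)
    fun x _ => decreasingRearrangement_nonneg f x
  have hbound : ‖fourierTransform f z‖ ≤ 2 * N * I := by
    rw [← ENNReal.ofReal_le_ofReal_iff (by positivity), ofReal_norm,
      ENNReal.ofReal_mul (by positivity), ENNReal.ofReal_mul zero_le_two,
      ← lintegral_min_volume_lt_abs_eq_ofReal_integral hf (by positivity)]
    simpa using hcrests.1.enorm_fourierTransform_le hf hz
  have hconst : 2 ≤ π * Real.sqrt 10 := by
    nlinarith [Real.pi_gt_three, Real.one_le_sqrt.2 (by norm_num : (1:ℝ) ≤ 10)]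
  calc ‖fourierTransform f z‖ ≤ 2 * N * I := hbound
    _ ≤ N * π * Real.sqrt 10 * I := by
        have := mul_le_mul_of_nonneg_right hconst (mul_nonneg N.cast_nonneg hI)
        linarith

/-- Theorem 1: if `f ∈ L¹` is nonnegative and `#crests(f) = N`, then for all `z > 0`,
`|f̂(z)| ≤ N·π·√10 · ∫₀^{1/z} f*(x) dx`. -/
theorem fourier_bound_of_crests (f : ℝ → ℝ) (hf : Integrable f)
    (hpos : ∀ x, 0 ≤ f x) (N : ℕ) (hN : 0 < N) (hcrests : CrestsEq f N) :
    ∀ z : ℝ, 0 < z →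
      ‖fourierTransform f z‖ ≤
        N * π * Real.sqrt 10 * ∫ x in (0:ℝ)..(1/z), decreasingRearrangement f x :=
  fourier_bound_of_crests_general f hf N hcrests
end

section
/- Let f ∈ L¹(ℝ) be nonnegative, vanish on the negative half-line, and be monotone decreasing on [0, ∞). Then for every z > 0, |f̂(z)| ≤ (π/2)·√10 · ∫₀^{1/z} f(x) dx. -/
open MeasureTheory Real Set

/-! Shifting `f` by half a period `π / z` multiplies `f̂(z)` by `-1`, so `2 f̂(z)` is the
transform of `f - f(· + π/z)` and `|f̂(z)| ≤ ½ ‖f - f(· + π/z)‖₁`. For `f` decreasing on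
`[0, ∞)` and vanishing before `0`, this `L¹` norm telescopes to `2 ∫₀^{π/z} f`. Since
`π/z ≤ 4/z` and each interval `[k/z, (k+1)/z]` carries at most the mass of `[0, 1/z]`, the
bound is at most `4 ∫₀^{1/z} f`, and `4 ≤ (π/2)√10`. -/

section FourierTransform

theorem fourierTransform_sub {f g : ℝ → ℝ} (hf : Integrable f) (hg : Integrable g) (z : ℝ) :
    fourierTransform (fun x => f x - g x) z = fourierTransform f z - fourierTransform g z := by
  have hexp : Continuous fun x : ℝ => Complex.exp (-(x * z) * Complex.I) := by fun_prop
  have hint : ∀ {u : ℝ → ℝ}, Integrable u →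
      Integrable fun x : ℝ => (u x : ℂ) * Complex.exp (-(x * z) * Complex.I) := fun hu =>
    hu.ofReal.mul_bdd (c := 1) hexp.aestronglyMeasurable
      (Filter.Eventually.of_forall fun x => by rw [Complex.norm_exp]; simp)
  simp only [fourierTransform, Complex.ofReal_sub, sub_mul]
  exact integral_sub (hint hf) (hint hg)

theorem fourierTransform_comp_add_right (f : ℝ → ℝ) (h z : ℝ) :
    fourierTransform (fun x => f (x + h)) z =
      Complex.exp (h * z * Complex.I) * fourierTransform f z := by
  unfold fourierTransform
  rw [← integral_sub_right_eq_self _ h, ← integral_const_mul]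
  congr 1 with x
  simp only [sub_add_cancel]
  rw [mul_left_comm, ← Complex.exp_add]
  push_cast
  ring_nf

theorem fourierTransform_sub_comp_add_pi_div {f : ℝ → ℝ} (hf : Integrable f) {z : ℝ}
    (hz : z ≠ 0) :
    fourierTransform (fun x => f x - f (x + π / z)) z = 2 * fourierTransform f z := by
  have hshift : Complex.exp ((π / z : ℝ) * z * Complex.I) = -1 := by
    rw [Complex.ofReal_div, div_mul_cancel₀ _ (Complex.ofReal_ne_zero.mpr hz),
      Complex.exp_pi_mul_I]
  rw [fourierTransform_sub hf (hf.comp_add_right _), fourierTransform_comp_add_right, hshift]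
  ring

theorem norm_fourierTransform_le_integral_abs (f : ℝ → ℝ) (z : ℝ) :
    ‖fourierTransform f z‖ ≤ ∫ x, |f x| := by
  refine (norm_integral_le_integral_norm _).trans_eq (congr_arg _ (funext fun x => ?_))
  rw [norm_mul, Complex.norm_exp]
  simp

theorem norm_fourierTransform_le_half_integral_abs_sub {f : ℝ → ℝ} (hf : Integrable f)
    {z : ℝ} (hz : z ≠ 0) :
    ‖fourierTransform f z‖ ≤ (1 / 2) * ∫ x, |f x - f (x + π / z)| := by
  have h := norm_fourierTransform_le_integral_abs (fun x => f x - f (x + π / z)) z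
  rw [fourierTransform_sub_comp_add_pi_div hf hz, norm_mul, Complex.norm_two] at h
  linarith

end FourierTransform

section Decreasing

variable {f : ℝ → ℝ}

theorem intervalIntegrable_of_antitoneOn_Ici (hdec : AntitoneOn f (Ici 0)) {u v : ℝ}
    (hu : 0 ≤ u) (hv : 0 ≤ v) : IntervalIntegrable f volume u v :=
  AntitoneOn.intervalIntegrable <| hdec.mono fun _ hx => (le_min hu hv).trans hx.1

theorem integral_abs_sub_comp_add_of_antitoneOn (hf : Integrable f) (hpos : ∀ x, 0 ≤ f x)
    (hzero : ∀ x < (0 : ℝ), f x = 0) (hdec : AntitoneOn f (Ici 0)) {h : ℝ} (hh : 0 ≤ h) :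
    ∫ x, |f x - f (x + h)| = 2 * ∫ x in (0 : ℝ)..h, f x := by
  have hpointwise : (fun x => |f x - f (x + h)|) =
      fun x => (f x - f (x + h)) + 2 * (Iio 0).indicator (fun y => f (y + h)) x := by
    funext x
    rcases lt_or_ge x 0 with hx | hx
    · rw [indicator_apply, if_pos (mem_Iio.mpr hx), hzero x hx, zero_sub, abs_neg,
        abs_of_nonneg (hpos _)]
      ring
    · rw [indicator_apply, if_neg (notMem_Iio.mpr hx), mul_zero, add_zero, abs_of_nonneg]
      exact sub_nonneg.mpr (hdec hx (show 0 ≤ x + h by linarith) (by linarith))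
  have hleft : ∫ x in Iio (0 : ℝ), f (x + h) = ∫ x in (0 : ℝ)..h, f x := by
    have hpre := (measurePreserving_add_right volume h).setIntegral_preimage_emb
      (measurableEmbedding_addRight h) f (Iio h)
    rw [show (· + h) ⁻¹' Iio h = Iio (0 : ℝ) by ext; simp] at hpre
    rw [hpre, ← Iio_union_Ico_eq_Iio hh,
      setIntegral_union (Iio_disjoint_Ici le_rfl |>.mono_right Ico_subset_Ici_self)
        measurableSet_Ico hf.integrableOn hf.integrableOn,
      setIntegral_eq_zero_of_forall_eq_zero fun x (hx : x ∈ Iio 0) => hzero x hx, zero_add,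
      integral_Ico_eq_integral_Ioo, intervalIntegral.integral_of_le hh,
      integral_Ioc_eq_integral_Ioo]
  have hfh : Integrable fun x => f (x + h) := hf.comp_add_right h
  have hind : Integrable fun x => 2 * (Iio 0).indicator (fun y => f (y + h)) x :=
    (hfh.indicator measurableSet_Iio).const_mul 2
  have hsub : Integrable fun x => f x - f (x + h) := hf.sub hfh
  rw [hpointwise, integral_add hsub hind, integral_sub hf hfh, integral_add_right_eq_self f h,
    sub_self, zero_add, integral_const_mul,
    integral_indicator measurableSet_Iio, hleft]

theorem intervalIntegral_add_le_of_antitoneOn (hdec : AntitoneOn f (Ici 0)) {a c : ℝ}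
    (ha : 0 ≤ a) (hc : 0 ≤ c) :
    ∫ x in c..c + a, f x ≤ ∫ x in (0 : ℝ)..a, f x := by
  have hshift : ∫ x in c..c + a, f x = ∫ x in (0 : ℝ)..a, f (x + c) := by
    rw [intervalIntegral.integral_comp_add_right, zero_add, add_comm a c]
  have hint_shift : IntervalIntegrable (fun x => f (x + c)) volume 0 a := by
    simpa using
      (intervalIntegrable_of_antitoneOn_Ici hdec hc (by linarith : 0 ≤ a + c)).comp_add_right c
  rw [hshift]
  refine intervalIntegral.integral_mono_on ha hint_shift
    (intervalIntegrable_of_antitoneOn_Ici hdec le_rfl ha) fun x hx => ?_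
  exact hdec hx.1 (show 0 ≤ x + c by linarith [hx.1]) (by linarith)

theorem intervalIntegral_natCast_mul_le_of_antitoneOn (hdec : AntitoneOn f (Ici 0)) {a : ℝ}
    (ha : 0 ≤ a) (n : ℕ) :
    ∫ x in (0 : ℝ)..n * a, f x ≤ n * ∫ x in (0 : ℝ)..a, f x := by
  induction n with
  | zero => simp
  | succ n ih =>
    have hna : 0 ≤ n * a := by positivity
    rw [Nat.cast_succ, add_mul, one_mul, ← intervalIntegral.integral_add_adjacent_intervals
      (intervalIntegrable_of_antitoneOn_Ici hdec le_rfl hna)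
      (intervalIntegrable_of_antitoneOn_Ici hdec hna (by positivity))]
    linarith [intervalIntegral_add_le_of_antitoneOn hdec ha hna]

end Decreasing

theorem four_le_pi_div_two_mul_sqrt_ten : (4 : ℝ) ≤ π / 2 * √10 := by
  nlinarith [pi_gt_d6, sq_sqrt (show (0 : ℝ) ≤ 10 by norm_num), sqrt_nonneg 10]

/-- Lemma: if `f ∈ L¹[0,∞)` is nonnegative and decreasing then
`|f̂(z)| ≤ (π/2)·√10 · ∫₀^{1/z} f(x) dx` for all `z > 0`. -/
theorem fourier_bound_of_decreasing (f : ℝ → ℝ) (hf : Integrable f)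
    (hpos : ∀ x, 0 ≤ f x) (hzero : ∀ x < (0:ℝ), f x = 0)
    (hdec : AntitoneOn f (Set.Ici 0)) :
    ∀ z : ℝ, 0 < z →
      ‖fourierTransform f z‖ ≤
        (π / 2) * Real.sqrt 10 * ∫ x in (0:ℝ)..(1/z), f x := by
  intro z hz
  have hpi : π / z ≤ (4 : ℕ) * (1 / z) := by
    rw [← mul_div_assoc, mul_one, Nat.cast_ofNat]
    exact div_le_div_of_nonneg_right pi_le_four hz.le
  calc ‖fourierTransform f z‖ ≤ (1 / 2) * ∫ x, |f x - f (x + π / z)| :=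
        norm_fourierTransform_le_half_integral_abs_sub hf hz.ne'
    _ = ∫ x in (0 : ℝ)..π / z, f x := by
        rw [integral_abs_sub_comp_add_of_antitoneOn hf hpos hzero hdec (by positivity)]; ring
    _ ≤ ∫ x in (0 : ℝ)..(4 : ℕ) * (1 / z), f x :=
        intervalIntegral.integral_mono_interval le_rfl (by positivity) hpi
          (Filter.Eventually.of_forall hpos) hf.intervalIntegrable
    _ ≤ 4 * ∫ x in (0 : ℝ)..1 / z, f x := by
        exact_mod_cast intervalIntegral_natCast_mul_le_of_antitoneOn hdec (by positivity) 4
    _ ≤ π / 2 * √10 * ∫ x in (0 : ℝ)..1 / z, f x :=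
        mul_le_mul_of_nonneg_right four_le_pi_div_two_mul_sqrt_ten
          (intervalIntegral.integral_nonneg (by positivity) fun x _ => hpos x)
end

section
/- Let f ∈ L¹(ℝ) be nonnegative, vanish on the negative half-line, and be monotone decreasing on [0, ∞). Let Cf(z) = ∫₀^∞ f(x) cos(xz) dx be the cosine transform. Then for every z > 0, |Cf(z)| ≤ ∫₀^{3π/(2z)} f(x) dx. -/
open MeasureTheory Real Set

/-!
Shifting by the half-period `h = π / z` flips the sign of `cos (x * z)`, so
`2 Cf(z) = ∫ (f x - f (x + h)) cos (x z)` and `2 |Cf(z)| ≤ ‖f - f (· + h)‖₁`.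
For a decreasing `f ≥ 0` supported on `[0, ∞)`, the difference `f - f (· + h)` has
total integral `0` and its negative part `f (· + h)` on `[-h, 0)` has integral `∫₀ʰ f`,
so `‖f - f (· + h)‖₁ = 2 ∫₀ʰ f`. Hence `|Cf(z)| ≤ ∫₀^{π/z} f ≤ ∫₀^{3π/(2z)} f`.
-/

section CosineShift

variable {f : ℝ → ℝ} {h z : ℝ}

lemma integral_comp_add_right_mul_cos_of_mul_eq_pi (f : ℝ → ℝ) (hhz : h * z = π) :
    ∫ x, f (x + h) * cos (x * z) = -∫ x, f x * cos (x * z) := by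
  calc ∫ x, f (x + h) * cos (x * z) = ∫ x, f (x + h) * cos ((x + h - h) * z) := by
        simp_rw [add_sub_cancel_right]
    _ = ∫ y, f y * cos ((y - h) * z) :=
        integral_add_right_eq_self (fun y => f y * cos ((y - h) * z)) h
    _ = -∫ x, f x * cos (x * z) := by
        rw [← integral_neg]
        congr 1 with y
        rw [sub_mul, hhz, cos_sub_pi, mul_neg]

lemma MeasureTheory.Integrable.mul_cos_mul_const (hf : Integrable f) (z : ℝ) :
    Integrable (fun x => f x * cos (x * z)) :=
  hf.mul_bdd (by fun_prop) (c := 1) (.of_forall fun x => by simpa using abs_cos_le_one (x * z))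

lemma two_mul_abs_integral_mul_cos_le (hf : Integrable f) (hhz : h * z = π) :
    2 * |∫ x, f x * cos (x * z)| ≤ ∫ x, |f x - f (x + h)| := by
  have hshift := hf.comp_add_right h
  have hdiff : Integrable fun x => f x - f (x + h) := hf.sub hshift
  have htwo : 2 * ∫ x, f x * cos (x * z) = ∫ x, (f x - f (x + h)) * cos (x * z) := by
    simp_rw [sub_mul]
    rw [integral_sub (hf.mul_cos_mul_const z) (hshift.mul_cos_mul_const z),
      integral_comp_add_right_mul_cos_of_mul_eq_pi f hhz]
    ring
  calc 2 * |∫ x, f x * cos (x * z)| = |∫ x, (f x - f (x + h)) * cos (x * z)| := by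
        rw [← htwo, abs_mul, abs_two]
    _ ≤ ∫ x, |f x - f (x + h)| := by
        rw [← norm_eq_abs]
        refine norm_integral_le_of_norm_le hdiff.abs (.of_forall fun x => ?_)
        rw [norm_mul, norm_eq_abs, norm_eq_abs]
        exact mul_le_of_le_one_right (abs_nonneg _) (abs_cos_le_one _)

end CosineShift

section DecreasingOnHalfLine

variable {f : ℝ → ℝ} {h : ℝ}

lemma abs_sub_comp_add_right_eq (hpos : ∀ x, 0 ≤ f x) (hzero : ∀ x < 0, f x = 0)
    (hdec : AntitoneOn f (Ici 0)) (hh : 0 ≤ h) (x : ℝ) :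
    |f x - f (x + h)| = f x - f (x + h) + 2 * (Iio h).indicator f (x + h) := by
  rcases lt_or_ge x 0 with hx | hx
  · rw [indicator_of_mem (by simpa using hx), hzero x hx, zero_sub, abs_neg,
      abs_of_nonneg (hpos _)]
    ring
  · have hle : f (x + h) ≤ f x := hdec hx (by simp only [mem_Ici]; linarith) (by linarith)
    rw [indicator_of_notMem (by simpa using hx), abs_of_nonneg (sub_nonneg.2 hle)]
    ring

lemma setIntegral_Iio_eq_intervalIntegral (hzero : ∀ x < 0, f x = 0) (hh : 0 ≤ h) :
    ∫ x in Iio h, f x = ∫ x in 0..h, f x := by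
  rw [setIntegral_eq_of_subset_of_forall_sdiff_eq_zero measurableSet_Iio Ico_subset_Iio_self
      fun x hx => hzero x (not_le.1 fun h0 => hx.2 ⟨h0, hx.1⟩),
    intervalIntegral.integral_of_le hh, integral_Ico_eq_integral_Ioo, integral_Ioc_eq_integral_Ioo]

lemma integral_abs_sub_comp_add_right (hf : Integrable f) (hpos : ∀ x, 0 ≤ f x)
    (hzero : ∀ x < 0, f x = 0) (hdec : AntitoneOn f (Ici 0)) (hh : 0 ≤ h) :
    ∫ x, |f x - f (x + h)| = 2 * ∫ x in 0..h, f x := by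
  have hshift := hf.comp_add_right h
  have hdiff : Integrable fun x => f x - f (x + h) := hf.sub hshift
  have hmean : ∫ x, (f x - f (x + h)) = 0 := by
    rw [integral_sub hf hshift, integral_add_right_eq_self f h, sub_self]
  simp_rw [abs_sub_comp_add_right_eq hpos hzero hdec hh]
  rw [integral_add hdiff
      (((hf.indicator measurableSet_Iio).comp_add_right h).const_mul 2),
    hmean, integral_const_mul, integral_add_right_eq_self ((Iio h).indicator f) h,
    integral_indicator measurableSet_Iio, setIntegral_Iio_eq_intervalIntegral hzero hh, zero_add]

end DecreasingOnHalfLine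

/-- Cosine transform estimate: if `f ∈ L¹[0,∞)` is nonnegative and decreasing then
`|Cf(z)| ≤ ∫₀^{3π/(2z)} f(x) dx` for all `z > 0`. -/
theorem cosine_transform_bound (f : ℝ → ℝ) (hf : Integrable f)
    (hpos : ∀ x, 0 ≤ f x) (hzero : ∀ x < (0:ℝ), f x = 0)
    (hdec : AntitoneOn f (Set.Ici 0)) :
    ∀ z : ℝ, 0 < z →
      |∫ x in Set.Ioi (0:ℝ), f x * Real.cos (x * z)| ≤
        ∫ x in (0:ℝ)..(3 * π / (2 * z)), f x := by
  intro z hz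
  have hh : 0 ≤ π / z := by positivity
  have hhalf : π / z ≤ 3 * π / (2 * z) := by
    rw [div_le_div_iff₀ hz (by positivity)]
    nlinarith [pi_pos]
  have hwhole : ∫ x in Ioi 0, f x * cos (x * z) = ∫ x, f x * cos (x * z) := by
    rw [← integral_Ici_eq_integral_Ioi]
    exact setIntegral_eq_integral_of_forall_compl_eq_zero fun x hx => by
      simp [hzero x (not_le.1 hx)]
  have hbound := two_mul_abs_integral_mul_cos_le hf (div_mul_cancel₀ π hz.ne')
  rw [integral_abs_sub_comp_add_right hf hpos hzero hdec hh] at hbound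
  calc |∫ x in Ioi 0, f x * cos (x * z)| ≤ ∫ x in 0..π / z, f x := by rw [hwhole]; linarith
    _ ≤ ∫ x in 0..3 * π / (2 * z), f x :=
        intervalIntegral.integral_mono_interval le_rfl hh hhalf (.of_forall hpos)
          hf.intervalIntegrable
end

section
/- For every positive integer N there exists a nonnegative function f ∈ L¹(ℝ), supported in [0, ∞), with #crests(f) = 5N, and a point z > 0 such that |f̂(z)| / (π·√10 · ∫₀^{1/z} f*(x) dx) > N. In fact f(x) = Σ_{i=0}^{5N−1} χ_{[2i, 2i+1]}(x) works: for z = 2lπ with l ∈ ℕ large enough that z > 1/(5N), one has |f̂(z)| = 10N/z and ∫₀^{1/z} f*(x) dx = 1/z, so the quotient equals 10N/(π√10) = N·√10/π > N. -/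
open MeasureTheory Real Set

/-!
The function `f = Σ_{i<n} χ_{[2i, 2i+1]}` has exactly `n` crests: it is the sum of its `n` bumps,
and fewer pieces cannot work, since a nonnegative function that crests once satisfies
`min (g x) (g y) ≤ g z` for `x ≤ z ≤ y`, so no piece can be positive on two bumps while vanishing
on the gap between them. At `z = π` every bump contributes `2 / (π i)` to `f̂(π)`, so
`|f̂(π)| = 2n / π`, while `f* = 1` on `[0, 1)` gives `∫₀^{1/π} f* = 1 / π`. For `n = 5N` the
quotient is `10N / (π √10)`, which exceeds `N` because `π < √10`.
-/

open Function

theorem CrestsOnce.min_le {g : ℝ → ℝ} (hg : CrestsOnce g) {x y z : ℝ} (hxz : x ≤ z)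
    (hzy : z ≤ y) : min (g x) (g y) ≤ g z := by
  obtain ⟨b, hmono, hanti⟩ := hg
  rcases le_total z b with hzb | hbz
  · exact (min_le_left _ _).trans (hmono (hxz.trans hzb) hzb hxz)
  · exact (min_le_right _ _).trans (hanti hbz (hbz.trans hzy) hzy)

theorem crestsOnce_indicator_Icc (a b : ℝ) {c : ℝ} (hc : 0 ≤ c) :
    CrestsOnce ((Icc a b).indicator fun _ => c) := by
  refine ⟨a, fun x _ y hy hxy => ?_, fun x hx y _ hxy => ?_⟩
  · by_cases hxm : x ∈ Icc a b
    · rw [le_antisymm hxy (le_trans hy hxm.1)]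
    · rw [indicator_of_notMem hxm]
      exact indicator_nonneg (fun _ _ => hc) y
  · by_cases hym : y ∈ Icc a b
    · have hxm : x ∈ Icc a b := ⟨hx, hxy.trans hym.2⟩
      rw [indicator_of_mem hym, indicator_of_mem hxm]
    · rw [indicator_of_notMem hym]
      exact indicator_nonneg (fun _ _ => hc) x

theorem HasCrestDecomp.le_of_zero_between {f : ℝ → ℝ} {m n : ℕ} (hf : HasCrestDecomp f m)
    (x : Fin n → ℝ) (hx : ∀ k, f (x k) ≠ 0)
    (hgap : ∀ k k', k < k' → ∃ y ∈ Icc (x k) (x k'), f y = 0) : n ≤ m := by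
  obtain ⟨g, hg0, hgc, -, hsum⟩ := hf
  have hpiece : ∀ k, ∃ i, g i (x k) ≠ 0 := fun k => by
    by_contra! h
    exact hx k (by simp [hsum, h])
  choose φ hφ using hpiece
  have hφ_ne : ∀ k k', k < k' → φ k ≠ φ k' := by
    intro k k' hkk' heq
    obtain ⟨y, hy, hfy⟩ := hgap k k' hkk'
    have hgy : g (φ k) y = 0 :=
      (Finset.sum_eq_zero_iff_of_nonneg fun j _ => hg0 j y).1 (hsum y ▸ hfy) _
        (Finset.mem_univ _)
    have hpos : 0 < min (g (φ k) (x k)) (g (φ k) (x k')) :=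
      lt_min ((hg0 _ _).lt_of_ne' (hφ k)) ((hg0 _ _).lt_of_ne' (heq ▸ hφ k'))
    linarith [(hgc (φ k)).min_le hy.1 hy.2]
  have hinj : Injective φ := by
    intro k k' heq
    by_contra hne
    rcases lt_or_gt_of_ne hne with h | h
    · exact hφ_ne k k' h heq
    · exact hφ_ne k' k h heq.symm
  simpa using Fintype.card_le_of_injective φ hinj

theorem fourierTransform_finset_sum {ι : Type*} (s : Finset ι) {f : ι → ℝ → ℝ}
    (hf : ∀ i ∈ s, Integrable (f i)) (z : ℝ) :
    fourierTransform (fun x => ∑ i ∈ s, f i x) z = ∑ i ∈ s, fourierTransform (f i) z := by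
  simp only [fourierTransform, Complex.ofReal_sum, Finset.sum_mul]
  refine integral_finsetSum s fun i hi => (hf i hi).ofReal.mul_bdd (c := 1) (by fun_prop) ?_
  refine Filter.Eventually.of_forall fun x => le_of_eq ?_
  rw [Complex.norm_exp]
  simp

theorem fourierTransform_indicator_Icc {a b : ℝ} (hab : a ≤ b) {z : ℝ} (hz : z ≠ 0) :
    fourierTransform ((Icc a b).indicator fun _ => 1) z =
      (Complex.exp (-(a * z) * Complex.I) - Complex.exp (-(b * z) * Complex.I)) /
        (z * Complex.I) := by
  have hc : -((z : ℂ) * Complex.I) ≠ 0 := by simp [hz]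
  have hintegrand : ∀ x : ℝ,
      (((Icc a b).indicator (fun _ => (1 : ℝ)) x : ℝ) : ℂ) *
          Complex.exp (-(x * z) * Complex.I) =
        (Icc a b).indicator (fun y : ℝ => Complex.exp (-(z * Complex.I) * y)) x := by
    intro x
    by_cases hx : x ∈ Icc a b
    · simp only [indicator_of_mem hx, Complex.ofReal_one, one_mul]
      ring_nf
    · simp [indicator_of_notMem hx]
  rw [fourierTransform, funext hintegrand, integral_indicator measurableSet_Icc,
    integral_Icc_eq_integral_Ioc, ← intervalIntegral.integral_of_le hab,
    integral_exp_mul_complex hc]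
  rw [div_eq_div_iff hc (by simpa using hc)]
  ring_nf

theorem decreasingRearrangement_eq_of_abs_le {f : ℝ → ℝ} {c x : ℝ} (hc : 0 < c)
    (hle : ∀ t, |f t| ≤ c) (hx : ENNReal.ofReal x < volume {t | |f t| = c}) :
    decreasingRearrangement f x = c := by
  suffices {α : ℝ | 0 < α ∧ volume {t : ℝ | α < |f t|} ≤ ENNReal.ofReal x} = Ici c by
    rw [decreasingRearrangement, this, csInf_Ici]
  ext α
  simp only [mem_ofPred_eq, mem_Ici]
  constructor
  · rintro ⟨-, hvol⟩
    by_contra! hαc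
    have hsub : {t | |f t| = c} ⊆ {t | α < |f t|} := fun t (ht : |f t| = c) =>
      show α < |f t| from ht ▸ hαc
    exact (hx.trans_le ((measure_mono hsub).trans hvol)).false
  · intro hcα
    have hempty : {t | α < |f t|} = ∅ :=
      eq_empty_of_forall_notMem fun t (ht : α < |f t|) => by linarith [hle t]
    exact ⟨hc.trans_le hcα, by simp [hempty]⟩

theorem pi_mul_sqrt_ten_lt_ten : π * √10 < 10 := by
  have hπ : π < √10 := by
    have h : (3.15 : ℝ) < √10 := by
      rw [Real.lt_sqrt (by norm_num)]
      norm_num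
    linarith [Real.pi_lt_d2]
  calc π * √10 < √10 * √10 := by gcongr
    _ = 10 := Real.mul_self_sqrt (by norm_num)

def bumpInterval (i : ℕ) : Set ℝ :=
  Icc (2 * (i : ℝ)) (2 * i + 1)

noncomputable def bumpSum (n : ℕ) : ℝ → ℝ := fun x =>
  ∑ i ∈ Finset.range n, (bumpInterval i).indicator (fun _ => 1) x

theorem pairwise_disjoint_bumpInterval : Pairwise (Disjoint on bumpInterval) := by
  intro i j hij
  rw [onFun, Set.disjoint_left]
  rintro t ⟨hi₁, hi₂⟩ ⟨hj₁, hj₂⟩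
  rcases lt_or_gt_of_ne hij with h | h
  · have : (i : ℝ) + 1 ≤ j := by exact_mod_cast h
    linarith
  · have : (j : ℝ) + 1 ≤ i := by exact_mod_cast h
    linarith

theorem bumpSum_eq_indicator (n : ℕ) :
    bumpSum n = (⋃ i ∈ Finset.range n, bumpInterval i).indicator fun _ => 1 :=
  (Finset.indicator_biUnion _ _ (pairwise_disjoint_bumpInterval.set_pairwise _)).symm

theorem bumpSum_nonneg (n : ℕ) (x : ℝ) : 0 ≤ bumpSum n x := by
  rw [bumpSum_eq_indicator]
  exact indicator_nonneg (fun _ _ => zero_le_one) x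

theorem bumpSum_le_one (n : ℕ) (x : ℝ) : bumpSum n x ≤ 1 := by
  rw [bumpSum_eq_indicator]
  exact indicator_apply_le' (fun _ => le_rfl) (fun _ => zero_le_one)

theorem bumpSum_eq_one {n k : ℕ} (hk : k < n) {x : ℝ} (hx : x ∈ bumpInterval k) :
    bumpSum n x = 1 := by
  rw [bumpSum_eq_indicator, indicator_of_mem]
  exact mem_biUnion (Finset.mem_range.2 hk) hx

theorem bumpSum_eq_zero (n : ℕ) {x : ℝ} (hx : ∀ i, x ∉ bumpInterval i) : bumpSum n x = 0 :=
  Finset.sum_eq_zero fun i _ => indicator_of_notMem (hx i) _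

theorem bumpSum_of_neg (n : ℕ) {x : ℝ} (hx : x < 0) : bumpSum n x = 0 :=
  bumpSum_eq_zero n fun i hi => by
    have : (0 : ℝ) ≤ i := i.cast_nonneg
    linarith [hi.1]

theorem bumpSum_gap (n k : ℕ) : bumpSum n (2 * k + 3 / 2) = 0 := by
  refine bumpSum_eq_zero n fun i ⟨hi₁, hi₂⟩ => ?_
  have hik : i < k + 1 := by exact_mod_cast (by linarith : (i : ℝ) < k + 1)
  have : (i : ℝ) ≤ k := by exact_mod_cast Nat.lt_succ_iff.1 hik
  linarith

theorem integrable_indicator_bumpInterval (i : ℕ) :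
    Integrable ((bumpInterval i).indicator fun _ => (1 : ℝ)) :=
  (integrable_indicator_iff measurableSet_Icc).2 (integrableOn_const measure_Icc_lt_top.ne)

theorem integrable_bumpSum (n : ℕ) : Integrable (bumpSum n) :=
  integrable_finsetSum _ fun i _ => integrable_indicator_bumpInterval i

theorem hasCrestDecomp_bumpSum (n : ℕ) : HasCrestDecomp (bumpSum n) n := by
  refine ⟨fun (i : Fin n) => (bumpInterval i).indicator fun _ => (1 : ℝ),
    fun i x => indicator_nonneg (fun _ _ => zero_le_one) x,
    fun i => crestsOnce_indicator_Icc _ _ zero_le_one, fun i j hij => ?_,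
    fun x => (Fin.sum_univ_eq_sum_range
      (fun i => (bumpInterval i).indicator (fun _ => 1) x) n).symm⟩
  refine measure_mono_null (subset_empty_iff.2 ?_) measure_empty
  exact ((pairwise_disjoint_bumpInterval (Fin.val_injective.ne hij)).mono
    support_indicator_subset support_indicator_subset).inter_eq

theorem crestsEq_bumpSum (n : ℕ) : CrestsEq (bumpSum n) n := by
  refine ⟨hasCrestDecomp_bumpSum n, fun m hm hdecomp => hm.not_ge ?_⟩
  refine hdecomp.le_of_zero_between (fun k => 2 * (k : ℕ) + 1 / 2)
    (fun k => by
      rw [bumpSum_eq_one k.isLt (x := 2 * (k : ℕ) + 1 / 2) ⟨by linarith, by linarith⟩]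
      exact one_ne_zero) fun k k' hkk' => ?_
  have : ((k : ℕ) : ℝ) + 1 ≤ (k' : ℕ) := by exact_mod_cast hkk'
  exact ⟨_, ⟨by linarith, by linarith⟩, bumpSum_gap n k⟩

theorem fourierTransform_bumpInterval (i : ℕ) :
    fourierTransform ((bumpInterval i).indicator fun _ => 1) π = 2 / (π * Complex.I) := by
  rw [bumpInterval, fourierTransform_indicator_Icc (by linarith) Real.pi_ne_zero]
  have hstart : Complex.exp (-(((2 * i : ℝ) : ℂ) * π) * Complex.I) = 1 := by
    rw [← Complex.exp_int_mul_two_pi_mul_I (-i)]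
    push_cast
    ring_nf
  have hend : Complex.exp (-(((2 * i + 1 : ℝ) : ℂ) * π) * Complex.I) = -1 := by
    have : -(((2 * i + 1 : ℝ) : ℂ) * π) * Complex.I =
        -(((2 * i : ℝ) : ℂ) * π) * Complex.I + -(π * Complex.I) := by push_cast; ring
    rw [this, Complex.exp_add, hstart, Complex.exp_neg, Complex.exp_pi_mul_I]
    norm_num
  rw [hstart, hend]
  ring

theorem norm_fourierTransform_bumpSum (n : ℕ) :
    ‖fourierTransform (bumpSum n) π‖ = 2 * n / π := by
  unfold bumpSum
  rw [fourierTransform_finset_sum _ fun i _ => integrable_indicator_bumpInterval i]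
  simp only [fourierTransform_bumpInterval, Finset.sum_const, Finset.card_range, nsmul_eq_mul]
  rw [norm_mul, norm_div, norm_mul, Complex.norm_natCast, Complex.norm_real, Complex.norm_I,
    Real.norm_of_nonneg Real.pi_pos.le]
  norm_num
  ring

theorem decreasingRearrangement_bumpSum {n : ℕ} (hn : 0 < n) {x : ℝ} (hx : x < 1) :
    decreasingRearrangement (bumpSum n) x = 1 := by
  refine decreasingRearrangement_eq_of_abs_le one_pos
    (fun t => (abs_of_nonneg (bumpSum_nonneg n t)).trans_le (bumpSum_le_one n t)) ?_
  have hsub : bumpInterval 0 ⊆ {t | |bumpSum n t| = 1} := fun t ht => by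
    simp [bumpSum_eq_one hn ht]
  calc ENNReal.ofReal x < 1 := ENNReal.ofReal_lt_one.2 hx
    _ = volume (bumpInterval 0) := by simp [bumpInterval]
    _ ≤ _ := measure_mono hsub

theorem integral_decreasingRearrangement_bumpSum {n : ℕ} (hn : 0 < n) {z : ℝ} (hz : 1 < z) :
    ∫ x in (0 : ℝ)..(1 / z), decreasingRearrangement (bumpSum n) x = 1 / z := by
  have hz₀ : 0 < z := one_pos.trans hz
  have hone : EqOn (decreasingRearrangement (bumpSum n)) (fun _ => 1) (uIcc 0 (1 / z)) := by
    intro x hx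
    rw [uIcc_of_le (by positivity)] at hx
    exact decreasingRearrangement_bumpSum hn (hx.2.trans_lt ((div_lt_one hz₀).2 hz))
  rw [intervalIntegral.integral_congr hone, intervalIntegral.integral_const]
  simp

/-- Example: for every `N ≥ 1` the function `f = Σ_{i=0}^{5N-1} χ_{[2i,2i+1]}`
is nonnegative, integrable, supported in `[0,∞)`, has `5N` crests, and satisfies
`|f̂(z)| / (π√10 ∫₀^{1/z} f*) > N` for some `z > 0`. -/
theorem crest_example (N : ℕ) (hN : 0 < N) :
    ∃ f : ℝ → ℝ,
      (f = fun x => ∑ i ∈ Finset.range (5 * N),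
        Set.indicator (Set.Icc (2 * (i:ℝ)) (2 * (i:ℝ) + 1)) (fun _ => (1:ℝ)) x) ∧
      Integrable f ∧ (∀ x, 0 ≤ f x) ∧ (∀ x < (0:ℝ), f x = 0) ∧
      CrestsEq f (5 * N) ∧
      ∃ z : ℝ, 0 < z ∧
        ‖fourierTransform f z‖ /
          (π * Real.sqrt 10 * ∫ x in (0:ℝ)..(1/z), decreasingRearrangement f x) > N := by
  refine ⟨bumpSum (5 * N), rfl, integrable_bumpSum _, bumpSum_nonneg _,
    fun x hx => bumpSum_of_neg _ hx, crestsEq_bumpSum _, π, Real.pi_pos, ?_⟩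
  have hπ : 1 < π := by linarith [Real.pi_gt_three]
  have hN' : (0 : ℝ) < N := by exact_mod_cast hN
  rw [norm_fourierTransform_bumpSum, integral_decreasingRearrangement_bumpSum (by omega) hπ,
    gt_iff_lt, lt_div_iff₀ (by positivity)]
  calc (N : ℝ) * (π * √10 * (1 / π)) = N * (π * √10) / π := by ring
    _ < N * 10 / π := by gcongr; exact pi_mul_sqrt_ten_lt_ten
    _ = 2 * ((5 * N : ℕ) : ℝ) / π := by push_cast; ring
end
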